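/- For integers 3 ≤ k ≤ p, the graph G_{k,p} is minimally k-edge-connected: λ(G_{k,p}) = k and λ(G_{k,p} − e) < k for every edge e. -/

import Mathlib

namespace AvgConn

/-- The graph `G_{k,p}` on `W ∪ X`, where `W` and `X` are copies of `Fin p` (`W` given by
`Sum.inl`, `X` by `Sum.inr`), and `w_i` is adjacent to `x_{(i+j) mod p}` for `0 ≤ j ≤ k-1`. -/
def Gkp (k p : ℕ) : SimpleGraph (Fin p ⊕ Fin p) :=
  SimpleGraph.fromRel (fun a b => ∃ i x : Fin p, a = Sum.inl i ∧ b = Sum.inr x ∧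
    ∃ j, j < k ∧ (x : ℕ) = ((i : ℕ) + j) % p)

/-- The edge connectivity of `G`: the least number of edges whose removal disconnects `G`. -/
noncomputable def edgeConn {V : Type*} (G : SimpleGraph V) : ℕ :=
  sInf {n | ∃ F : Set (Sym2 V), F ⊆ G.edgeSet ∧ F.ncard = n ∧
    ¬ (G.deleteEdges F).Connected}

/-- `G` is minimally `k`-edge-connected. -/
noncomputable def MinimallyKEdgeConnected {V : Type*} (G : SimpleGraph V) (k : ℕ) : Prop :=
  edgeConn G = k ∧ ∀ e ∈ G.edgeSet, edgeConn (G.deleteEdges {e}) < k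

/-!
The edges of `G_{k,p}` split into the `k` perfect matchings `M_j = {w_i x_{i+j}}`, and
`crossings s j` counts the edges of `M_j` cut by a two-colouring `s` of the vertices. If `s` is
not constant, two consecutive matchings (whose union is a Hamiltonian cycle) cut at least two
edges: if `M_j` cuts none, `W` is coloured like its `M_j`-partners, and `M_{j+1}` then cuts at
every change of the cyclic colouring of `X`, of which there are at least two. Three consecutive
matchings cut at least three edges: otherwise `M_j` and `M_{j+2}` cut nothing, so the colouring
of `X` is 2-periodic and a change at `i` recurs at `i + 1` and `i + 2`. Summing over
`M_0, …, M_{k-1}` gives `λ ≥ k`. Conversely the `k` edges at `w_i` form a cut, and for an edge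
`e` at `w_i` the other `k - 1` of them form a cut of `G_{k,p} - e`.
-/

open Finset Fin.CommRing SimpleGraph

section EdgeConn
variable {V : Type*} {G : SimpleGraph V}

theorem edgeConn_le_ncard {F : Set (Sym2 V)} (hF : F ⊆ G.edgeSet)
    (h : ¬ (G.deleteEdges F).Connected) : edgeConn G ≤ F.ncard :=
  Nat.sInf_le ⟨F, hF, rfl, h⟩

theorem not_connected_deleteEdges_incidenceSet {v w : V} (hvw : v ≠ w) :
    ¬ (G.deleteEdges (G.incidenceSet v)).Connected := by
  intro h
  obtain ⟨walk⟩ := h.preconnected v w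
  cases walk with
  | nil => exact hvw rfl
  | cons hadj _ =>
    obtain ⟨hadj, hnot⟩ := deleteEdges_adj.mp hadj
    exact hnot ⟨hadj, Sym2.mem_mk_left _ _⟩

theorem ncard_incidenceSet_eq_degree (v : V) [Fintype (G.neighborSet v)] :
    (G.incidenceSet v).ncard = G.degree v := by
  classical
  rw [← card_neighborSet_eq_degree, ← Nat.card_coe_set_eq,
    Nat.card_congr (G.incidenceSetEquivNeighborSet v), Nat.card_eq_fintype_card]

theorem edgeConn_eq_degree {v w : V} [Fintype (G.neighborSet v)] (hvw : v ≠ w)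
    (h : ∀ F ⊆ G.edgeSet, ¬ (G.deleteEdges F).Connected → G.degree v ≤ F.ncard) :
    edgeConn G = G.degree v := by
  have hinc : ¬ (G.deleteEdges (G.incidenceSet v)).Connected :=
    not_connected_deleteEdges_incidenceSet hvw
  refine le_antisymm ?_ (le_csInf ⟨_, _, G.incidenceSet_subset v, rfl, hinc⟩ ?_)
  · rw [← ncard_incidenceSet_eq_degree]
    exact edgeConn_le_ncard (G.incidenceSet_subset v) hinc
  · rintro n ⟨F, hF, rfl, hF'⟩
    exact h F hF hF'

theorem edgeConn_deleteEdges_lt_degree {v w : V} [Fintype (G.neighborSet v)] (hvw : v ≠ w)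
    {e : Sym2 V} (he : e ∈ G.incidenceSet v) :
    edgeConn (G.deleteEdges {e}) < G.degree v := by
  classical
  have hpos : 0 < G.degree v := by
    rw [← ncard_incidenceSet_eq_degree]
    exact (Set.ncard_pos (Set.toFinite _)).mpr ⟨e, he⟩
  have hsub : G.incidenceSet v \ {e} ⊆ (G.deleteEdges {e}).edgeSet := by
    rw [edgeSet_deleteEdges]
    exact Set.sdiff_subset_sdiff_left (G.incidenceSet_subset v)
  have hdel : (G.deleteEdges {e}).deleteEdges (G.incidenceSet v \ {e}) =
      G.deleteEdges (G.incidenceSet v) := by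
    rw [deleteEdges_deleteEdges, Set.union_sdiff_cancel (Set.singleton_subset_iff.mpr he)]
  have := edgeConn_le_ncard hsub (hdel ▸ not_connected_deleteEdges_incidenceSet hvw)
  rw [Set.ncard_sdiff_singleton_of_mem he, ncard_incidenceSet_eq_degree] at this
  omega

theorem mem_of_adj_of_not_reachable_iff {F : Set (Sym2 V)} {u x y : V} (hxy : G.Adj x y)
    (h : ¬ ((G.deleteEdges F).Reachable u x ↔ (G.deleteEdges F).Reachable u y)) :
    s(x, y) ∈ F := by
  by_contra hF
  have hadj : (G.deleteEdges F).Adj x y := deleteEdges_adj.mpr ⟨hxy, hF⟩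
  exact h ⟨fun hx => hx.trans hadj.reachable, fun hy => hy.trans hadj.symm.reachable⟩

end EdgeConn

section Cyclic
variable {p : ℕ} [NeZero p]

theorem exists_eq_true_and_add_one_eq_false {f : Fin p → Bool} {x y : Fin p}
    (hx : f x = true) (hy : f y = false) : ∃ i, f i = true ∧ f (i + 1) = false := by
  by_contra! h
  have hall : ∀ n : ℕ, f (x + (n : Fin p)) = true := by
    intro n
    induction n with
    | zero => simpa using hx
    | succ n ih => simpa [add_assoc] using h _ ih
  simpa [hy] using hall (y - x).val

theorem two_le_card_filter_ne_add_one {f : Fin p → Bool} {x y : Fin p} (h : f x ≠ f y) :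
    2 ≤ #{i | f i ≠ f (i + 1)} := by
  wlog hx : f x = true generalizing x y
  · exact this h.symm (by simpa [hx] using h)
  obtain ⟨i, hi, hi'⟩ := exists_eq_true_and_add_one_eq_false hx (by simpa [hx] using h.symm)
  obtain ⟨i₂, hi₂, hi₂'⟩ := exists_eq_true_and_add_one_eq_false (f := fun i => !f i)
    (x := y) (y := x) (by simpa [hx] using h.symm) (by simpa using hx)
  simp only [Bool.not_eq_true', Bool.not_eq_false'] at hi₂ hi₂'
  refine Finset.one_lt_card_iff.mpr ⟨i, i₂, ?_, ?_, ?_⟩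
  · simp [hi, hi']
  · simp [hi₂, hi₂']
  · rintro rfl
    simp [hi] at hi₂

theorem three_le_card_filter_ne_add_one (hp : 3 ≤ p) {f : Fin p → Bool}
    (hf : ∀ i, f (i + 2) = f i) {x y : Fin p} (h : f x ≠ f y) :
    3 ≤ #{i | f i ≠ f (i + 1)} := by
  obtain ⟨i, hi⟩ :=
    Finset.card_pos.mp (lt_of_lt_of_le two_pos (two_le_card_filter_ne_add_one h))
  simp only [Finset.mem_filter, Finset.mem_univ, true_and] at hi
  have hchange₁ : f (i + 1) ≠ f (i + 1 + 1) := by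
    rw [add_assoc, one_add_one_eq_two, hf]; exact hi.symm
  have hchange₂ : f (i + 2) ≠ f (i + 2 + 1) := by
    rw [add_right_comm, hf, hf]; exact hi
  have hone : (1 : Fin p) ≠ 0 := by simp [Fin.ext_iff, Nat.mod_eq_of_lt (by omega : 1 < p)]
  have htwo : (2 : Fin p) ≠ 0 := by simp [Fin.ext_iff, Nat.mod_eq_of_lt (by omega : 2 < p)]
  have hsucc : i + 1 ≠ i + 2 := by
    rw [show i + 2 = i + 1 + 1 by ring]
    simpa using hone
  exact Finset.two_lt_card_iff.mpr ⟨i, i + 1, i + 2, by simpa using hi, by simpa using hchange₁,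
    by simpa using hchange₂, by simpa using hone, by simpa using htwo, hsucc⟩

def crossings (s : Fin p ⊕ Fin p → Bool) (j : ℕ) : ℕ :=
  #{i | s (.inl i) ≠ s (.inr (i + j))}

theorem exists_inr_ne_of_forall_inl_eq {α : Type*} {s : α ⊕ α → Bool} {u v : α ⊕ α}
    (huv : s u ≠ s v) {t : α → α} (ht : ∀ i, s (.inl i) = s (.inr (t i))) :
    ∃ x y, s (.inr x) ≠ s (.inr y) := by
  have hval : ∀ w, ∃ x, s w = s (.inr x) := by
    rintro (i | x)
    exacts [⟨t i, ht i⟩, ⟨x, rfl⟩]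
  obtain ⟨x, hx⟩ := hval u
  obtain ⟨y, hy⟩ := hval v
  exact ⟨x, y, hx ▸ hy ▸ huv⟩

theorem crossings_add (s : Fin p ⊕ Fin p → Bool) (j n : ℕ) :
    crossings s (j + n) = #{i | s (.inl i) ≠ s (.inr (i + n + j))} := by
  simp only [crossings, Nat.cast_add, add_assoc, add_comm (j : Fin p)]

theorem two_le_crossings_add_crossings_succ {s : Fin p ⊕ Fin p → Bool} {u v : Fin p ⊕ Fin p}
    (huv : s u ≠ s v) (j : ℕ) : 2 ≤ crossings s j + crossings s (j + 1) := by
  set b : Fin p → Bool := fun x => s (.inr (x + j))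
  have hj : crossings s j = #{i | s (.inl i) ≠ b i} := rfl
  have hj' : crossings s (j + 1) = #{i | s (.inl i) ≠ b (i + 1)} := by
    simp only [crossings_add, b, Nat.cast_one]
  have hchanges : ∀ t : Fin p → Fin p, (∀ i, s (.inl i) = b (t i)) →
      2 ≤ #{i | b i ≠ b (i + 1)} := by
    intro t ht
    obtain ⟨x, y, hxy⟩ := exists_inr_ne_of_forall_inl_eq huv ht
    exact two_le_card_filter_ne_add_one (x := x - j) (y := y - j) (by simpa [b] using hxy)
  rcases Nat.eq_zero_or_pos (crossings s j) with h0 | h0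
  · have hsb : ∀ i, s (.inl i) = b i := by
      simpa [hj, Finset.filter_eq_empty_iff] using h0
    rw [hj', Finset.filter_congr (fun i _ => by rw [hsb i])]
    exact (hchanges id hsb).trans (Nat.le_add_left _ _)
  rcases Nat.eq_zero_or_pos (crossings s (j + 1)) with h1 | h1
  · have hsb : ∀ i, s (.inl i) = b (i + 1) := by
      simpa [hj', Finset.filter_eq_empty_iff] using h1
    rw [hj, Finset.filter_congr (fun i _ => by rw [hsb i, ne_comm])]
    exact (hchanges _ hsb).trans (Nat.le_add_right _ _)
  omega

theorem three_le_crossings_add_crossings_add_crossings {s : Fin p ⊕ Fin p → Bool}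
    {u v : Fin p ⊕ Fin p} (huv : s u ≠ s v) (hp : 3 ≤ p) (j : ℕ) :
    3 ≤ crossings s j + crossings s (j + 1) + crossings s (j + 2) := by
  by_contra! hlt
  have h01 := two_le_crossings_add_crossings_succ huv j
  have h12 : 2 ≤ crossings s (j + 1) + crossings s (j + 2) :=
    two_le_crossings_add_crossings_succ huv (j + 1)
  set b : Fin p → Bool := fun x => s (.inr (x + j))
  have hsb : ∀ i, s (.inl i) = b i := by
    have : crossings s j = 0 := by omega
    simpa [crossings, Finset.filter_eq_empty_iff] using this
  have hb2 : ∀ i, b (i + 2) = b i := by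
    have : crossings s (j + 2) = 0 := by omega
    simp only [crossings_add, Finset.card_eq_zero, Finset.filter_eq_empty_iff] at this
    intro i
    simpa [hsb, b, eq_comm] using this (Finset.mem_univ i)
  have hmid : crossings s (j + 1) = #{i | b i ≠ b (i + 1)} := by
    simp only [crossings_add, hsb, b, Nat.cast_one]
  obtain ⟨x, y, hxy⟩ := exists_inr_ne_of_forall_inl_eq huv (t := (· + j)) hsb
  have := three_le_card_filter_ne_add_one hp hb2 (x := x - j) (y := y - j)
    (by simpa [b] using hxy)
  omega

theorem le_sum_crossings {s : Fin p ⊕ Fin p → Bool} {u v : Fin p ⊕ Fin p} (huv : s u ≠ s v)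
    {k : ℕ} (hk : 2 ≤ k) (hkp : k ≤ p) : k ≤ ∑ j ∈ range k, crossings s j := by
  induction k using Nat.strong_induction_on with
  | _ k ih =>
    obtain rfl | rfl | _ : k = 2 ∨ k = 3 ∨ 4 ≤ k := by omega
    · simpa [Finset.sum_range_succ] using two_le_crossings_add_crossings_succ huv 0
    · simpa [Finset.sum_range_succ, add_assoc] using
        three_le_crossings_add_crossings_add_crossings huv hkp 0
    · obtain ⟨m, rfl⟩ : ∃ m, k = m + 2 := ⟨k - 2, by omega⟩
      have := ih m (by omega) (by omega) (by omega)
      have := two_le_crossings_add_crossings_succ huv m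
      rw [Finset.sum_range_succ, Finset.sum_range_succ]
      omega

end Cyclic

section Gkp
variable {k p : ℕ}

theorem Gkp_exists_inl_mem {e : Sym2 (Fin p ⊕ Fin p)} (he : e ∈ (Gkp k p).edgeSet) :
    ∃ i, Sum.inl i ∈ e := by
  induction e using Sym2.ind with
  | _ a b =>
    obtain ⟨-, ⟨i, -, rfl, -⟩ | ⟨i, -, rfl, -⟩⟩ := he
    exacts [⟨i, Sym2.mem_mk_left _ _⟩, ⟨i, Sym2.mem_mk_right _ _⟩]

variable [NeZero p]

theorem Gkp_adj_inl {i : Fin p} {w : Fin p ⊕ Fin p} :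
    (Gkp k p).Adj (.inl i) w ↔ ∃ j < k, w = .inr (i + j) := by
  have hval : ∀ (x : Fin p) (j : ℕ), (x : ℕ) = ((i : ℕ) + j) % p ↔ x = i + j := by
    intro x j
    rw [Fin.ext_iff, Fin.val_add, Fin.val_natCast, Nat.add_mod_mod]
  cases w with
  | inl _ => simp [Gkp]
  | inr x => simp [Gkp, hval]

theorem natCast_injOn_Iio : Set.InjOn (Nat.cast : ℕ → Fin p) (Set.Iio p) := by
  intro a ha b hb h
  simpa [Fin.val_cast_of_lt ha, Fin.val_cast_of_lt hb] using congrArg Fin.val h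

theorem Gkp_degree_inl [DecidableRel (Gkp k p).Adj] (hkp : k ≤ p) (i : Fin p) :
    (Gkp k p).degree (.inl i) = k := by
  have : (Gkp k p).neighborFinset (.inl i) = (range k).image (fun j : ℕ => .inr (i + j)) := by
    ext w
    simp [Gkp_adj_inl, eq_comm]
  rw [← card_neighborFinset_eq_degree, this, card_image_of_injOn, card_range]
  intro a ha b hb h
  exact natCast_injOn_Iio (lt_of_lt_of_le (by simpa using ha) hkp)
    (lt_of_lt_of_le (by simpa using hb) hkp) (by simpa using h)

theorem Gkp_le_ncard_of_not_connected (hk : 2 ≤ k) (hkp : k ≤ p)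
    {F : Set (Sym2 (Fin p ⊕ Fin p))} (hF : ¬ ((Gkp k p).deleteEdges F).Connected) :
    k ≤ F.ncard := by
  classical
  obtain ⟨u, v, huv⟩ : ∃ u v, ¬ ((Gkp k p).deleteEdges F).Reachable u v := by
    by_contra! h
    exact hF (connected_iff _ |>.mpr ⟨h, ⟨.inl 0⟩⟩)
  set s : Fin p ⊕ Fin p → Bool := fun w => decide (((Gkp k p).deleteEdges F).Reachable u w)
  have hs : s u ≠ s v := by simp [s, huv]
  set P := (range k).sigma fun j => ({i | s (.inl i) ≠ s (.inr (i + j))} : Finset (Fin p))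
  set edge : (Σ _ : ℕ, Fin p) → Sym2 (Fin p ⊕ Fin p) :=
    fun q => s(.inl q.2, .inr (q.2 + q.1))
  have hmaps : ∀ q ∈ (P : Set _), edge q ∈ F := by
    rintro ⟨j, i⟩ hq
    simp only [P, coe_sigma, Set.mem_sigma_iff, coe_range, Set.mem_Iio, coe_filter, Finset.mem_univ,
      true_and, Set.mem_ofPred_eq] at hq
    exact mem_of_adj_of_not_reachable_iff (Gkp_adj_inl.mpr ⟨j, hq.1, rfl⟩)
      (by simpa [s] using hq.2)
  have hinj : Set.InjOn edge P := by
    rintro ⟨j, i⟩ hq ⟨j', i'⟩ hq' h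
    simp only [edge, Sym2.eq_iff, Sum.inl.injEq, Sum.inr.injEq, reduceCtorEq, false_and,
      or_false] at h
    obtain ⟨rfl, h⟩ := h
    simp only [P, coe_sigma, Set.mem_sigma_iff, coe_range, Set.mem_Iio] at hq hq'
    rw [natCast_injOn_Iio (lt_of_lt_of_le hq.1 hkp) (lt_of_lt_of_le hq'.1 hkp) (add_left_cancel h)]
  calc k ≤ ∑ j ∈ range k, crossings s j := le_sum_crossings hs hk hkp
    _ = (P : Set (Σ _ : ℕ, Fin p)).ncard := by rw [Set.ncard_coe_finset, card_sigma]; rfl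
    _ ≤ F.ncard := Set.ncard_le_ncard_of_injOn edge hmaps hinj

end Gkp

theorem Gkp_minimally_k_edge_connected (k p : ℕ) (hk : 3 ≤ k) (hkp : k ≤ p) :
    MinimallyKEdgeConnected (Gkp k p) k := by
  classical
  have : NeZero p := ⟨by omega⟩
  have hne : ∀ i : Fin p, (.inl i : Fin p ⊕ Fin p) ≠ .inr i := fun _ => Sum.inl_ne_inr
  refine ⟨?_, fun e he => ?_⟩
  · have := edgeConn_eq_degree (hne 0) fun F _ hF => by
      rw [Gkp_degree_inl hkp]
      exact Gkp_le_ncard_of_not_connected (by omega) hkp hF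
    rwa [Gkp_degree_inl hkp] at this
  · obtain ⟨i, hi⟩ := Gkp_exists_inl_mem he
    have := edgeConn_deleteEdges_lt_degree (hne i) ⟨he, hi⟩
    rwa [Gkp_degree_inl hkp] at this

end AvgConn
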